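/- For any dyadic probability distribution P = (p₁,…,pₙ) (each pᵢ = 2^(−kᵢ) for a positive integer kᵢ), there exists a binary alphabetic code C for the ordered symbols whose average length satisfies E[C] ≤ H(P) + 1 − p₁ − pₙ. -/

import Mathlib

/-- No codeword is a prefix of another. -/
def PrefixFree {n : ℕ} (w : Fin n → List Bool) : Prop :=
  ∀ i j : Fin n, i ≠ j → ¬ (w i <+: w j)

/-- The codewords are strictly increasing in the lexicographic order on binary strings. -/
def LexIncreasing {n : ℕ} (w : Fin n → List Bool) : Prop :=
  ∀ i j : Fin n, i < j → List.Lex (· < ·) (w i) (w j)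

/-- A binary alphabetic code: prefix-free and lexicographically increasing codewords. -/
def IsAlphabeticCode {n : ℕ} (w : Fin n → List Bool) : Prop :=
  PrefixFree w ∧ LexIncreasing w


/-- Binary expansion of `c` with `ℓ` bits, most significant first. -/
def msbits : ℕ → ℕ → List Bool
  | 0, _ => []
  | (ℓ+1), c => (decide (2^ℓ ≤ c)) :: msbits ℓ (c % 2^ℓ)

lemma msbits_length (ℓ : ℕ) : ∀ c, (msbits ℓ c).length = ℓ := by
  induction ℓ with
  | zero => intro c; rfl
  | succ a ih => intro c; simp [msbits, ih]

lemma msbits_key (ℓ : ℕ) : ∀ ℓ' c c', c < 2^ℓ → c' < 2^ℓ' →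
    (c+1) * 2^ℓ' ≤ c' * 2^ℓ →
    List.Lex (· < ·) (msbits ℓ c) (msbits ℓ' c') ∧
    ¬ msbits ℓ c <+: msbits ℓ' c' ∧ ¬ msbits ℓ' c' <+: msbits ℓ c := by
  induction ℓ with
  | zero =>
    intro ℓ' c c' hc hc' hle
    interval_cases c
    simp at hle
    omega
  | succ a ih =>
    intro ℓ' c c' hc hc' hle
    match ℓ' with
    | 0 =>
      interval_cases c'
      simp at hle
    | b + 1 =>
      have hA : 0 < 2^a := Nat.pow_pos (by norm_num)
      have hB : 0 < 2^b := Nat.pow_pos (by norm_num)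
      have hpa : (2:ℕ)^(a+1) = 2^a * 2 := pow_succ 2 a
      have hpb : (2:ℕ)^(b+1) = 2^b * 2 := pow_succ 2 b
      by_cases hx : 2^a ≤ c <;> by_cases hy : 2^b ≤ c'
      · have hc2 : c % 2^a = c - 2^a := by
          rw [Nat.mod_eq_sub_mod hx, Nat.mod_eq_of_lt (by omega)]
        have hc'2 : c' % 2^b = c' - 2^b := by
          rw [Nat.mod_eq_sub_mod hy, Nat.mod_eq_of_lt (by omega)]
        have hrec := ih b (c % 2^a) (c' % 2^b)
          (by rw [hc2]; omega) (by rw [hc'2]; omega)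
          (by rw [hc2, hc'2]
              zify [hx, hy]
              have : ((c:ℤ)+1) * 2^(b+1) ≤ (c':ℤ) * 2^(a+1) := by exact_mod_cast hle
              push_cast [pow_succ] at this ⊢
              nlinarith [this])
        simp only [msbits, hx, hy]
        refine ⟨List.Lex.cons hrec.1, ?_, ?_⟩
        · rw [List.cons_prefix_cons]; exact fun h => hrec.2.1 h.2
        · rw [List.cons_prefix_cons]; exact fun h => hrec.2.2 h.2
      · exfalso
        nlinarith [hle]
      · simp only [msbits, hx, hy]
        refine ⟨List.Lex.rel (by simp), ?_, ?_⟩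
        · rw [List.cons_prefix_cons]; simp
        · rw [List.cons_prefix_cons]; simp
      · have hc2 : c % 2^a = c := Nat.mod_eq_of_lt (by omega)
        have hc'2 : c' % 2^b = c' := Nat.mod_eq_of_lt (by omega)
        have hrec := ih b (c % 2^a) (c' % 2^b)
          (by omega) (by omega)
          (by rw [hc2, hc'2]; nlinarith [hle])
        simp only [msbits, hx, hy]
        refine ⟨List.Lex.cons hrec.1, ?_, ?_⟩
        · rw [List.cons_prefix_cons]; exact fun h => hrec.2.1 h.2
        · rw [List.cons_prefix_cons]; exact fun h => hrec.2.2 h.2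


/-- For dyadic distributions there is an alphabetic code with average length at most
H(P) + 1 − p₁ − pₙ. -/
theorem dyadic_bound (n : ℕ) (hn : 0 < n) (p : Fin n → ℝ) (k : Fin n → ℕ)
    (hk : ∀ i, 0 < k i) (hdyadic : ∀ i, p i = (2 : ℝ) ^ (-(k i : ℤ)))
    (hsum : ∑ i, p i = 1) :
    ∃ w : Fin n → List Bool, IsAlphabeticCode w ∧
      ∑ i, p i * ((w i).length : ℝ) ≤
        (-∑ i, p i * Real.logb 2 (p i)) + 1 - p ⟨0, hn⟩ - p ⟨n - 1, by omega⟩ := by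
  -- p values are at most 1/2 and positive
  have hple : ∀ i, p i ≤ 1/2 := by
    intro i
    rw [hdyadic i]
    calc (2:ℝ) ^ (-(k i : ℤ)) ≤ 2 ^ (-(1:ℤ)) := by
          apply zpow_le_zpow_right₀ (by norm_num)
          have := hk i; omega
      _ = 1/2 := by norm_num
  have hn2 : 2 ≤ n := by
    by_contra h
    have hn1 : n = 1 := by omega
    subst hn1
    rw [Fin.sum_univ_one] at hsum
    have := hple 0
    linarith
  -- the common scale
  set K : ℕ := (∑ i, k i) + 1 with hK_def
  have hkK : ∀ i : Fin n, k i + 1 ≤ K := by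
    intro i
    have : k i ≤ ∑ j, k j := Finset.single_le_sum (fun j _ => Nat.zero_le _) (Finset.mem_univ i)
    omega
  set f : ℕ → ℕ := fun j => if h : j < n then 2^(K - k ⟨j, h⟩) else 0 with hf_def
  set S : ℕ → ℕ := fun m => ∑ j ∈ Finset.range m, f j with hS_def
  have hSsucc : ∀ m, S (m+1) = S m + f m := by
    intro m; simp only [hS_def]; rw [Finset.sum_range_succ]
  have hSmono : ∀ a b, a ≤ b → S a ≤ S b := by
    intro a b hab
    exact Finset.sum_le_sum_of_subset (Finset.range_subset_range.mpr hab)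
  -- total sum is 2^K
  have hfval : ∀ i : Fin n, f i.val = 2^(K - k i) := by
    intro i; simp only [hf_def]; rw [dif_pos i.isLt]
  have hfreal : ∀ i : Fin n, (f i.val : ℝ) = 2^K * p i := by
    intro i
    rw [hfval i, hdyadic i]
    have h1 : (2:ℝ)^(K - k i) * 2^(k i) = 2^K := by
      rw [← pow_add]; congr 1; have := hkK i; omega
    have h2 : (2:ℝ) ^ (-(k i : ℤ)) = (2^(k i) : ℝ)⁻¹ := by
      rw [zpow_neg, zpow_natCast]
    rw [h2]
    push_cast
    field_simp
    linarith [h1]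
  have hStot : S n = 2^K := by
    have hcast : (S n : ℝ) = (2^K : ℝ) := by
      simp only [hS_def]
      push_cast
      rw [← Fin.sum_univ_eq_sum_range (fun j => (f j : ℝ)) n]
      calc ∑ i : Fin n, (f i.val : ℝ) = ∑ i : Fin n, 2^K * p i := by
            exact Finset.sum_congr rfl fun i _ => hfreal i
        _ = 2^K * ∑ i, p i := by rw [Finset.mul_sum]
        _ = 2^K := by rw [hsum, mul_one]
    exact_mod_cast hcast
  -- code lengths and codeword values
  set L : Fin n → ℕ := fun i => if i.val = 0 ∨ i.val = n - 1 then k i else k i + 1 with hL_def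
  set c : Fin n → ℕ := fun i =>
    if i.val = 0 then 0
    else if i.val = n - 1 then 2^(k i) - 1
    else (S i.val + 2^(K - (k i + 1)) - 1) / 2^(K - (k i + 1)) with hc_def
  have hLK : ∀ i, L i ≤ K := by
    intro i; have := hkK i
    simp only [hL_def]
    split <;> omega
  have hpow_split : ∀ i : Fin n, 2^(L i) * 2^(K - L i) = 2^K := by
    intro i; rw [← pow_add]; congr 1; have := hLK i; omega
  -- the main per-symbol interval facts
  have hmain : ∀ i : Fin n, c i < 2^(L i) ∧ S i.val ≤ c i * 2^(K - L i) ∧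
      (c i + 1) * 2^(K - L i) ≤ S (i.val + 1) := by
    intro i
    by_cases h0 : i.val = 0
    · have hL : L i = k i := by simp [hL_def, h0]
      have hc : c i = 0 := by simp [hc_def, h0]
      have hS0 : S 0 = 0 := by simp [hS_def]
      refine ⟨by rw [hc]; positivity, ?_, ?_⟩
      · rw [hc, h0, hS0]; simp
      · rw [hc, hL, h0]
        rw [hSsucc 0, hS0]
        have : f 0 = 2^(K - k i) := by
          have := hfval i; rwa [h0] at this
        omega
    · by_cases hlast : i.val = n - 1
      · have hL : L i = k i := by
          simp only [hL_def]; rw [if_pos (Or.inr hlast)]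
        have hc : c i = 2^(k i) - 1 := by
          simp only [hc_def]; rw [if_neg h0, if_pos hlast]
        have hkpos : 0 < 2^(k i) := Nat.pow_pos (by norm_num)
        have hsplit : 2^(k i) * 2^(K - k i) = 2^K := by
          rw [← pow_add]; congr 1; have := hkK i; omega
        have hSn : S ((n-1) + 1) = S (n-1) + f (n-1) := hSsucc (n-1)
        have hfv : f (n-1) = 2^(K - k i) := by
          have := hfval i; rwa [hlast] at this
        have hSn' : S n = S (n-1) + 2^(K - k i) := by
          rw [← hfv, ← hSn]; congr 1; omega
        have hfle : 2^(K - k i) ≤ 2^K := by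
          apply Nat.pow_le_pow_right (by norm_num); omega
        refine ⟨by rw [hc, hL]; omega, ?_, ?_⟩
        · rw [hc, hL, hlast]
          have he : (2^(k i) - 1) * 2^(K - k i) = 2^K - 2^(K - k i) := by
            rw [Nat.sub_mul, hsplit, one_mul]
          rw [he]
          omega
        · rw [hc, hL, hlast]
          have h1 : (2^(k i) - 1 + 1) = 2^(k i) := by omega
          rw [h1, hsplit]
          have h2 : (n - 1) + 1 = n := by omega
          rw [h2, hStot]
      · -- middle symbol
        have hL : L i = k i + 1 := by simp [hL_def, h0, hlast]
        set d : ℕ := 2^(K - (k i + 1)) with hd_def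
        have hd : 0 < d := Nat.pow_pos (by norm_num)
        have hc : c i = (S i.val + d - 1) / d := by
          simp only [hc_def]; rw [if_neg h0, if_neg hlast]
        have hdm := Nat.div_add_mod (S i.val + d - 1) d
        have hmlt : (S i.val + d - 1) % d < d := Nat.mod_lt _ hd
        have hmul : c i * d = d * ((S i.val + d - 1) / d) := by
          rw [hc, Nat.mul_comm]
        have hcd_le : c i * d ≤ S i.val + d - 1 := by omega
        have hcd_ge : S i.val ≤ c i * d := by omega
        have hf2d : f i.val = 2 * d := by
          rw [hfval i, hd_def]
          rw [← pow_succ']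
          congr 1
          have := hkK i; omega
        have hSstep : S (i.val + 1) = S i.val + 2 * d := by
          rw [hSsucc, hf2d]
        have hright : (c i + 1) * d ≤ S (i.val + 1) := by
          rw [hSstep, add_mul, one_mul]; omega
        have hSle : S (i.val + 1) ≤ 2^K := by
          rw [← hStot]; exact hSmono _ _ (by omega)
        have hclt : c i < 2^(L i) := by
          have h1 : c i * d < 2^(L i) * d := by
            have : 2^(L i) * d = 2^K := by
              rw [hL, hd_def]
              rw [← pow_add]; congr 1; have := hkK i; omega
            rw [this]
            omega
          exact Nat.lt_of_mul_lt_mul_right h1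
        refine ⟨hclt, ?_, ?_⟩
        · rw [hL]; exact hcd_ge
        · rw [hL]; exact hright
  -- pairwise cross inequality
  have hcross : ∀ i j : Fin n, i < j → (c i + 1) * 2^(L j) ≤ c j * 2^(L i) := by
    intro i j hij
    have h1 : (c i + 1) * 2^(K - L i) ≤ c j * 2^(K - L j) := by
      calc (c i + 1) * 2^(K - L i) ≤ S (i.val + 1) := (hmain i).2.2
        _ ≤ S j.val := hSmono _ _ (by exact hij)
        _ ≤ c j * 2^(K - L j) := (hmain j).2.1
    have h2 : ((c i + 1) * 2^(L j)) * 2^K ≤ (c j * 2^(L i)) * 2^K := by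
      calc ((c i + 1) * 2^(L j)) * 2^K
          = ((c i + 1) * 2^(K - L i)) * (2^(L i) * 2^(L j)) := by
            rw [← hpow_split i]; ring
        _ ≤ (c j * 2^(K - L j)) * (2^(L i) * 2^(L j)) :=
            Nat.mul_le_mul_right _ h1
        _ = (c j * 2^(L i)) * 2^K := by
            rw [← hpow_split j]; ring
    exact Nat.le_of_mul_le_mul_right h2 (Nat.pow_pos (by norm_num))
  -- the code
  refine ⟨fun i => msbits (L i) (c i), ⟨?_, ?_⟩, ?_⟩
  · intro i j hij
    rcases lt_or_gt_of_ne hij with h | h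
    · exact (msbits_key (L i) (L j) (c i) (c j) (hmain i).1 (hmain j).1 (hcross i j h)).2.1
    · exact (msbits_key (L j) (L i) (c j) (c i) (hmain j).1 (hmain i).1 (hcross j i h)).2.2
  · intro i j hij
    exact (msbits_key (L i) (L j) (c i) (c j) (hmain i).1 (hmain j).1 (hcross i j hij)).1
  · -- the length bound
    set i0 : Fin n := ⟨0, hn⟩ with hi0
    set iN : Fin n := ⟨n - 1, by omega⟩ with hiN
    have hne : i0 ≠ iN := by
      simp only [hi0, hiN, ne_eq, Fin.mk.injEq]
      omega
    have hlog : ∀ i, Real.logb 2 (p i) = -(k i : ℝ) := by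
      intro i
      rw [hdyadic i, Real.logb, Real.log_zpow]
      rw [mul_div_assoc, div_self (ne_of_gt (Real.log_pos (by norm_num)))]
      push_cast; ring
    have hkey : ∀ i : Fin n, p i * ((msbits (L i) (c i)).length : ℝ) =
        p i * (k i) + p i - (if i = i0 then p i else 0) - (if i = iN then p i else 0) := by
      intro i
      rw [msbits_length]
      by_cases h0 : i = i0
      · have hv : i.val = 0 := by rw [h0]
        have hL : L i = k i := by simp [hL_def, hv]
        have hNe : ¬ (i = iN) := by rw [h0]; exact hne
        rw [hL, if_pos h0, if_neg hNe]
        ring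
      · by_cases hlast : i = iN
        · have hv : i.val = n - 1 := by rw [hlast]
          have hL : L i = k i := by simp [hL_def, hv]
          rw [hL, if_neg h0, if_pos hlast]
          ring
        · have hv0 : i.val ≠ 0 := by
            intro h; apply h0; apply Fin.ext; simpa using h
          have hvN : i.val ≠ n - 1 := by
            intro h; apply hlast; apply Fin.ext; simpa using h
          have hL : L i = k i + 1 := by simp [hL_def, hv0, hvN]
          rw [hL, if_neg h0, if_neg hlast]
          push_cast
          ring
    have hLHS : ∑ i, p i * ((msbits (L i) (c i)).length : ℝ) =
        (∑ i, p i * (k i)) + 1 - p i0 - p iN := by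
      rw [Finset.sum_congr rfl fun i _ => hkey i]
      rw [Finset.sum_sub_distrib, Finset.sum_sub_distrib, Finset.sum_add_distrib]
      rw [hsum]
      rw [Finset.sum_ite_eq' Finset.univ i0 p, Finset.sum_ite_eq' Finset.univ iN p]
      simp
    have hRHS : (-∑ i, p i * Real.logb 2 (p i)) = ∑ i, p i * (k i) := by
      rw [← Finset.sum_neg_distrib]
      apply Finset.sum_congr rfl
      intro i _
      rw [hlog i]
      ring
    rw [hLHS, hRHS]
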